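/- Single-atom completeness with respect to the inductive characterization of regular semantics: let (P,coP) be a logic program with coclauses, H a finite set of finite atoms, A a finite atom, E a finite set of equations, and σ ∈ sol(E) a ground substitution defined on all variables of H and A. If the judgment (Hσ ⊢ Aσ) belongs to the inductive interpretation of Loop(P,coP), then there exist a finite set of equations E' and θ ∈ sol(E') such that P;coP ⊢ H : ⟨A | E⟩ ⇒ E' is derivable and σ ⊑ θ. -/

import Mathlib

/- Framework: flexible coinductive logic programming (logic programs with coclauses).
   Terms are possibly infinite trees, modelled as M-types of a polynomial functor. -/

namespace FlexLP

/-- A first-order signature: function symbols and predicate symbols, each with an arity.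
Variables are represented by natural numbers (a countably infinite set). -/
structure Sig where
  Func : Type
  far : Func → ℕ
  Pred : Type
  par : Pred → ℕ

/-- Polynomial functor whose M-type is the type of possibly infinite terms:
nodes are labelled by function symbols (with `far` children) or variables (no children). -/
def TermP (S : Sig) : PFunctor :=
  ⟨S.Func ⊕ ℕ, fun l => Fin (match l with | Sum.inl f => S.far f | Sum.inr _ => 0)⟩

/-- Possibly infinite terms over the signature `S`. -/
def Term (S : Sig) : Type := (TermP S).M

/-- The term consisting of a single variable `x`. -/
def Term.var (S : Sig) (x : ℕ) : Term S :=
  PFunctor.M.mk ⟨Sum.inr x, fun i => i.elim0⟩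

/-- The variable `x` occurs in the term `t`. -/
inductive Term.Occurs (S : Sig) (x : ℕ) : Term S → Prop
  | root (t : Term S) (h : (PFunctor.M.dest t).1 = Sum.inr x) : Term.Occurs S x t
  | child (t : Term S) (i : (TermP S).B (PFunctor.M.dest t).1)
      (h : Term.Occurs S x ((PFunctor.M.dest t).2 i)) : Term.Occurs S x t

/-- The term `t` is finite (syntactic): all its branches are finite. -/
inductive Term.IsFinite (S : Sig) : Term S → Prop
  | mk (t : Term S) (h : ∀ i, Term.IsFinite S ((PFunctor.M.dest t).2 i)) : Term.IsFinite S t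

/-- The term `t` is ground: no variable occurs in it. -/
def Term.Ground (S : Sig) (t : Term S) : Prop := ∀ x, ¬ Term.Occurs S x t

/-- A substitution: a map from a finite set of variables to terms. -/
structure Subst (S : Sig) where
  toFun : ℕ → Option (Term S)
  finDom : {x | (toFun x).isSome}.Finite

/-- Domain of a substitution. -/
def Subst.dom {S : Sig} (σ : Subst S) : Set ℕ := {x | (σ.toFun x).isSome}

/-- A substitution is ground if all its values are ground terms. -/
def Subst.Ground {S : Sig} (σ : Subst S) : Prop :=
  ∀ x t, σ.toFun x = some t → Term.Ground S t

/-- `σ ⊑ θ` : `dom σ ⊆ dom θ` and the two substitutions agree on `dom σ`. -/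
def Subst.le {S : Sig} (σ θ : Subst S) : Prop :=
  ∀ x t, σ.toFun x = some t → θ.toFun x = some t

/-- One step of (simultaneous) substitution application, as a coalgebra.
The boolean flag records whether we are still in the original term (`true`)
or inside a substituted term (`false`). -/
def substStep (S : Sig) (σ : Subst S) : Term S × Bool → (TermP S).Obj (Term S × Bool) :=
  fun p =>
    match PFunctor.M.dest p.1, p.2 with
    | ⟨Sum.inl f, ch⟩, b => ⟨Sum.inl f, fun i => (ch i, b)⟩
    | ⟨Sum.inr x, ch⟩, true =>
        match σ.toFun x with
        | some s =>
            match PFunctor.M.dest s with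
            | ⟨l, ch'⟩ => ⟨l, fun i => (ch' i, false)⟩
        | none => ⟨Sum.inr x, fun i => (ch i, true)⟩
    | ⟨Sum.inr x, ch⟩, false => ⟨Sum.inr x, fun i => (ch i, false)⟩

/-- Application `tσ` of a substitution to a term. -/
def Term.subst {S : Sig} (t : Term S) (σ : Subst S) : Term S :=
  PFunctor.M.corec (substStep S σ) (t, true)

/-- Atoms: a predicate symbol applied to terms (a possibly infinite tree whose
root is labelled by a predicate symbol). -/
structure Atom (S : Sig) where
  pred : S.Pred
  args : Fin (S.par pred) → Term S

/-- The variable `x` occurs in the atom `A`. -/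
def Atom.Occurs {S : Sig} (x : ℕ) (A : Atom S) : Prop := ∃ i, Term.Occurs S x (A.args i)

/-- Ground atoms. The set of all ground atoms is the complete Herbrand base. -/
def Atom.Ground {S : Sig} (A : Atom S) : Prop := ∀ i, Term.Ground S (A.args i)

/-- Finite (syntactic) atoms. -/
def Atom.IsFinite {S : Sig} (A : Atom S) : Prop := ∀ i, Term.IsFinite S (A.args i)

/-- Application of a substitution to an atom. -/
def Atom.subst {S : Sig} (A : Atom S) (σ : Subst S) : Atom S :=
  ⟨A.pred, fun i => Term.subst (A.args i) σ⟩

/-- A (definite) clause `head :- body`, made of finite atoms. -/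
structure Clause (S : Sig) where
  head : Atom S
  body : List (Atom S)
  finHead : head.IsFinite
  finBody : ∀ B ∈ body, B.IsFinite

/-- Variables occurring in a clause. -/
def clauseVars {S : Sig} (C : Clause S) : Set ℕ :=
  {x | Atom.Occurs x C.head ∨ ∃ B ∈ C.body, Atom.Occurs x B}

/-- `Ground P` : the ground instances of clauses of `P`, viewed as inference rules
(pairs premises/conclusion) on the complete Herbrand base. -/
def GroundInst {S : Sig} (P : Set (Clause S)) : Set (Atom S × List (Atom S)) :=
  {r | ∃ C ∈ P, ∃ σ : Subst S, σ.Ground ∧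
        r.1 = C.head.subst σ ∧ r.2 = C.body.map (fun B => B.subst σ) ∧
        r.1.Ground ∧ ∀ B ∈ r.2, B.Ground}

/-- The (one step) inference operator `T_P` associated to a program. -/
def TP {S : Sig} (P : Set (Clause S)) (I : Set (Atom S)) : Set (Atom S) :=
  {A | ∃ r ∈ GroundInst P, r.1 = A ∧ ∀ B ∈ r.2, B ∈ I}

/-- `I` is a model of `P`. -/
def IsModel {S : Sig} (P : Set (Clause S)) (I : Set (Atom S)) : Prop := TP P I ⊆ I

/-- `I` is a comodel of `P`. -/
def IsComodel {S : Sig} (P : Set (Clause S)) (I : Set (Atom S)) : Prop := I ⊆ TP P I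

/-- `Ind P` : the inductive declarative semantics, i.e. the least model of `P`. -/
def Ind {S : Sig} (P : Set (Clause S)) : Set (Atom S) := ⋂₀ {I | IsModel P I}

/-- `FlexCo (P,coP)` : the declarative semantics of a logic program with coclauses,
i.e. the largest comodel of `P` included in `Ind (P ∪ coP)` (union of all such comodels). -/
def FlexCo {S : Sig} (P coP : Set (Clause S)) : Set (Atom S) :=
  ⋃₀ {I | IsComodel P I ∧ I ⊆ Ind (P ∪ coP)}

/-- `FlexReg (P,coP)` : the regular declarative semantics, i.e. the union of all
finite comodels of `P` included in `Ind (P ∪ coP)`. -/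
def FlexReg {S : Sig} (P coP : Set (Clause S)) : Set (Atom S) :=
  ⋃₀ {I | I.Finite ∧ IsComodel P I ∧ I ⊆ Ind (P ∪ coP)}

/-- An equation `s ≐ t` between terms. -/
abbrev Eqn (S : Sig) := Term S × Term S

/-- Variables occurring in a set of equations. -/
def eqnVars {S : Sig} (E : Set (Eqn S)) : Set ℕ :=
  {x | ∃ e ∈ E, Term.Occurs S x e.1 ∨ Term.Occurs S x e.2}

/-- `E` is a finite set of equations between finite (syntactic) terms. -/
def EqnSetFin {S : Sig} (E : Set (Eqn S)) : Prop :=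
  E.Finite ∧ ∀ e ∈ E, Term.IsFinite S e.1 ∧ Term.IsFinite S e.2

/-- `sol E` : the set of solutions of `E`, i.e. ground substitutions defined on all
variables of `E` that unify all the equations in `E`. -/
def sol {S : Sig} (E : Set (Eqn S)) : Set (Subst S) :=
  {σ | σ.Ground ∧ eqnVars E ⊆ σ.dom ∧ ∀ e ∈ E, e.1.subst σ = e.2.subst σ}

/-- `E` is solvable. -/
def Solvable {S : Sig} (E : Set (Eqn S)) : Prop := (sol E).Nonempty

/-- `eqs(A,B)` : the equations between the corresponding arguments of two atoms
with the same predicate symbol. -/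
def atomEqs {S : Sig} (A B : Atom S) : Set (Eqn S) :=
  {e | ∃ (h : A.pred = B.pred) (i : Fin (S.par A.pred)),
        e = (A.args i, B.args (Fin.cast (congrArg S.par h) i))}

/-- Variables occurring in a set of atoms. -/
def atomsVars {S : Sig} (H : Set (Atom S)) : Set ℕ := {x | ∃ A ∈ H, Atom.Occurs x A}

/-- Variables occurring in a sequence of atoms (a goal). -/
def goalVars {S : Sig} (G : List (Atom S)) : Set ℕ := {x | ∃ A ∈ G, Atom.Occurs x A}

/-- `ρ` is a renaming of the variables of clause `C` to fresh variables avoiding `avoid`: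
it maps (injectively) every variable of `C` to a variable not in `avoid`. -/
def FreshRenamingFor {S : Sig} (ρ : Subst S) (C : Clause S) (avoid : Set ℕ) : Prop :=
  (∀ x t, ρ.toFun x = some t → ∃ y, t = Term.var S y ∧ y ∉ avoid) ∧
  clauseVars C ⊆ ρ.dom ∧
  (∀ x y, ρ.toFun x = ρ.toFun y → (ρ.toFun x).isSome → x = y)

/-- The big-step operational semantics judgment `P;coP ⊢ H : ⟨G | E⟩ ⇒ E'` of
flexible coSLD resolution, inductively defined by the rules (empty), (co-hyp), (step). -/
inductive OpSem (S : Sig) :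
    Set (Clause S) → Set (Clause S) → Set (Atom S) → List (Atom S) →
      Set (Eqn S) → Set (Eqn S) → Prop
  | empty (P coP : Set (Clause S)) (H : Set (Atom S)) (E : Set (Eqn S)) :
      OpSem S P coP H [] E E
  | cohyp {P coP : Set (Clause S)} {H : Set (Atom S)} {G1 G2 : List (Atom S)}
      {A B : Atom S} {E1 E2 E3 : Set (Eqn S)} :
      coP ≠ ∅ → B ∈ H → A.pred = B.pred →
      Solvable (E1 ∪ atomEqs A B) →
      OpSem S (P ∪ coP) ∅ ∅ [A] (E1 ∪ atomEqs A B) E2 →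
      OpSem S P coP H (G1 ++ G2) E2 E3 →
      OpSem S P coP H (G1 ++ A :: G2) E1 E3
  | step {P coP : Set (Clause S)} {H : Set (Atom S)} {G1 G2 : List (Atom S)}
      {A : Atom S} {E1 E2 E3 : Set (Eqn S)} (C : Clause S) (ρ : Subst S) :
      C ∈ P →
      FreshRenamingFor ρ C (eqnVars E1 ∪ atomsVars H ∪ goalVars (G1 ++ A :: G2)) →
      A.pred = C.head.pred →
      Solvable (E1 ∪ atomEqs A (C.head.subst ρ)) →
      OpSem S P coP (H ∪ {A}) (C.body.map (fun B => B.subst ρ))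
        (E1 ∪ atomEqs A (C.head.subst ρ)) E2 →
      OpSem S P coP H (G1 ++ G2) E2 E3 →
      OpSem S P coP H (G1 ++ A :: G2) E1 E3

/-- `Ans(G,E,I)` : the set of answers to the goal `⟨G | E⟩` correct in the
interpretation `I`. -/
def Ans {S : Sig} (G : List (Atom S)) (E : Set (Eqn S)) (I : Set (Atom S)) :
    Set (Subst S) :=
  {σ | σ ∈ sol E ∧ goalVars G ⊆ σ.dom ∧ ∀ A ∈ G, A.subst σ ∈ I}

/-- The inductive interpretation of the inference system `Loop(P,coP)`, whose judgments
`H ⊢ A` pair a ground atom with a set of ground atoms (circular hypotheses);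
rules: (hp) `H ⊢ A` if `A ∈ H` and `A ∈ Ind (P ∪ coP)`;
(rule) from `H∪{A} ⊢ B` for every premise `B` of a ground instance of a clause of `P`
with conclusion `A`, infer `H ⊢ A`. -/
inductive LoopInd {S : Sig} (P coP : Set (Clause S)) : Set (Atom S) → Atom S → Prop
  | hp {H : Set (Atom S)} {A : Atom S} :
      A ∈ H → A ∈ Ind (P ∪ coP) → LoopInd P coP H A
  | rule {H : Set (Atom S)} {A : Atom S} (r : Atom S × List (Atom S)) :
      r ∈ GroundInst P → r.1 = A →
      (∀ B ∈ r.2, LoopInd P coP (H ∪ {A}) B) →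
      LoopInd P coP H A

/-!
Induction on the derivation of `Hσ ⊢ Aσ` in `Loop(P,coP)`, carrying the rest of the goal as a
continuation. A (rule) step is matched by (step): the clause is renamed apart by shifting its
variables above the domain of `σ`, and `σ` extended by the shifted ground instance solves the new
equations. An (hp) step is matched by (co-hyp), whose subderivation exists by completeness of
resolution for `Ind (P ∪ coP)`; that completeness is the (rule) argument again, run as a proof
that the atoms satisfying the claim form a model. If `coP = ∅`, (co-hyp) is unavailable, but then
`Ind (P ∪ coP) = Ind P` and the same completeness applies to `P` directly.
-/
section Terms

variable {S : Sig}

theorem Term.eq_of_dest_eq {s t : Term S} (h : PFunctor.M.dest s = PFunctor.M.dest t) :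
    s = t :=
  Function.LeftInverse.injective PFunctor.M.mk_dest h

theorem corec_substStep_false (σ : Subst S) (u : Term S) :
    PFunctor.M.corec (substStep S σ) (u, false) = u := by
  refine PFunctor.M.bisim (fun a b => a = PFunctor.M.corec (substStep S σ) (b, false)) ?_ _ _ rfl
  rintro _ y rfl
  rcases hd : PFunctor.M.dest y with ⟨l, ch⟩
  refine ⟨l, _, ch, ?_, rfl, fun i => rfl⟩
  rw [PFunctor.M.dest_corec]
  cases l <;> simp only [substStep, hd] <;> rfl

theorem Term.dest_subst_inl {σ : Subst S} {t : Term S} {f : S.Func} {ch}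
    (hd : PFunctor.M.dest t = ⟨Sum.inl f, ch⟩) :
    PFunctor.M.dest (t.subst σ) = ⟨Sum.inl f, fun i => Term.subst (ch i) σ⟩ := by
  rw [Term.subst, PFunctor.M.dest_corec]
  simp only [substStep, hd]
  rfl

theorem Term.subst_var_some {σ : Subst S} {t s : Term S} {x : ℕ} {ch}
    (hd : PFunctor.M.dest t = ⟨Sum.inr x, ch⟩) (hs : σ.toFun x = some s) :
    t.subst σ = s := by
  refine Term.eq_of_dest_eq ?_
  rcases hds : PFunctor.M.dest s with ⟨l, ch'⟩
  rw [Term.subst, PFunctor.M.dest_corec]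
  simp only [PFunctor.map, substStep, hd, hs, hds]
  exact congrArg _ (funext fun i => corec_substStep_false σ (ch' i))

theorem Term.subst_var_none {σ : Subst S} {t : Term S} {x : ℕ} {ch}
    (hd : PFunctor.M.dest t = ⟨Sum.inr x, ch⟩) (hs : σ.toFun x = none) :
    t.subst σ = t := by
  refine Term.eq_of_dest_eq ?_
  rw [Term.subst, PFunctor.M.dest_corec]
  simp only [PFunctor.map, substStep, hd, hs]
  exact congrArg _ (funext fun i : Fin 0 => i.elim0)

theorem Term.occurs_iff {x : ℕ} {t : Term S} {l ch} (hd : PFunctor.M.dest t = ⟨l, ch⟩) :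
    Term.Occurs S x t ↔ l = Sum.inr x ∨ ∃ i, Term.Occurs S x (ch i) := by
  constructor
  · rintro (⟨_, h⟩ | ⟨_, i, h⟩)
    · rw [hd] at h
      exact Or.inl h
    · have h' : ∃ i, Term.Occurs S x ((PFunctor.M.dest t).2 i) := ⟨i, h⟩
      rw [hd] at h'
      exact Or.inr h'
  · have child : ∀ i, Term.Occurs S x ((PFunctor.M.dest t).2 i) → Term.Occurs S x t :=
      Term.Occurs.child t
    rw [hd] at child
    rintro (h | ⟨i, h⟩)
    · exact Term.Occurs.root t (by rw [hd]; exact h)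
    · exact child i h

theorem Term.isFinite_iff {t : Term S} {l ch} (hd : PFunctor.M.dest t = ⟨l, ch⟩) :
    Term.IsFinite S t ↔ ∀ i, Term.IsFinite S (ch i) := by
  constructor
  · rintro ⟨_, h⟩
    rwa [hd] at h
  · intro h
    exact Term.IsFinite.mk t (by rwa [hd])

theorem Term.dest_var (x : ℕ) :
    PFunctor.M.dest (Term.var S x) = ⟨Sum.inr x, fun i => i.elim0⟩ :=
  PFunctor.M.dest_mk _

theorem Term.var_isFinite (x : ℕ) : Term.IsFinite S (Term.var S x) :=
  (Term.isFinite_iff (Term.dest_var x)).2 fun i => i.elim0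

theorem Term.var_injective {x y : ℕ} (h : Term.var S x = Term.var S y) : x = y := by
  have := congrArg (fun t => (PFunctor.M.dest t).1) h
  simp only [Term.dest_var] at this
  exact Sum.inr.inj this

theorem Term.subst_congr {σ θ : Subst S} {t : Term S} (ht : Term.IsFinite S t)
    (h : ∀ x, Term.Occurs S x t → σ.toFun x = θ.toFun x) :
    t.subst σ = t.subst θ := by
  induction ht with
  | mk t _ ih =>
    rcases hd : PFunctor.M.dest t with ⟨_ | y, ch⟩
    · rw [hd] at ih
      refine Term.eq_of_dest_eq ?_
      rw [Term.dest_subst_inl hd, Term.dest_subst_inl hd]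
      exact congrArg _ (funext fun i =>
        ih i fun x hx => h x ((Term.occurs_iff hd).2 (Or.inr ⟨i, hx⟩)))
    · have hy := h y ((Term.occurs_iff hd).2 (Or.inl rfl))
      rcases hs : σ.toFun y with _ | s
      · rw [Term.subst_var_none hd hs, Term.subst_var_none hd (hy ▸ hs)]
      · rw [Term.subst_var_some hd hs, Term.subst_var_some hd (hy ▸ hs)]

theorem Term.subst_eq_of_le {σ θ : Subst S} (hle : σ.le θ) {t : Term S}
    (ht : Term.IsFinite S t) (hdom : ∀ x, Term.Occurs S x t → x ∈ σ.dom) :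
    t.subst θ = t.subst σ := by
  refine (Term.subst_congr ht fun x hx => ?_).symm
  obtain ⟨s, hs⟩ := Option.isSome_iff_exists.1 (hdom x hx)
  rw [hs, hle x s hs]

theorem Term.subst_subst {ρ θ τ : Subst S} {t : Term S} (ht : Term.IsFinite S t)
    (h : ∀ x, Term.Occurs S x t →
      ∃ u, ρ.toFun x = some u ∧ τ.toFun x = some (u.subst θ)) :
    (t.subst ρ).subst θ = t.subst τ := by
  induction ht with
  | mk t _ ih =>
    rcases hd : PFunctor.M.dest t with ⟨_ | y, ch⟩
    · rw [hd] at ih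
      refine Term.eq_of_dest_eq ?_
      rw [Term.dest_subst_inl (Term.dest_subst_inl hd), Term.dest_subst_inl hd]
      exact congrArg _ (funext fun i =>
        ih i fun x hx => h x ((Term.occurs_iff hd).2 (Or.inr ⟨i, hx⟩)))
    · obtain ⟨u, hρ, hτ⟩ := h y ((Term.occurs_iff hd).2 (Or.inl rfl))
      rw [Term.subst_var_some hd hρ, Term.subst_var_some hd hτ]

theorem Term.subst_isFinite {σ : Subst S} {t : Term S} (ht : Term.IsFinite S t)
    (hσ : ∀ x s, σ.toFun x = some s → Term.IsFinite S s) :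
    Term.IsFinite S (t.subst σ) := by
  induction ht with
  | mk t hch ih =>
    rcases hd : PFunctor.M.dest t with ⟨_ | y, ch⟩
    · rw [hd] at ih
      exact (Term.isFinite_iff (Term.dest_subst_inl hd)).2 ih
    · rcases hs : σ.toFun y with _ | s
      · rw [Term.subst_var_none hd hs]
        exact Term.IsFinite.mk t hch
      · rw [Term.subst_var_some hd hs]
        exact hσ y s hs

theorem Term.occurs_subst_of_eq_none {σ : Subst S} {x : ℕ} {t : Term S}
    (h : Term.Occurs S x t) (hx : σ.toFun x = none) : Term.Occurs S x (t.subst σ) := by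
  induction h with
  | root t h =>
    rcases hd : PFunctor.M.dest t with ⟨l, ch⟩
    obtain rfl : l = Sum.inr x := by rw [hd] at h; exact h
    rw [Term.subst_var_none hd hx]
    exact Term.Occurs.root t (by rw [hd])
  | child t i _ ih =>
    have hi : ∃ i, Term.Occurs S x (Term.subst ((PFunctor.M.dest t).2 i) σ) := ⟨i, ih⟩
    rcases hd : PFunctor.M.dest t with ⟨_ | y, ch⟩
    · rw [hd] at hi
      exact (Term.occurs_iff (Term.dest_subst_inl hd)).2 (Or.inr hi)
    · rw [hd] at hi
      exact hi.elim fun i _ => i.elim0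

theorem Term.mem_dom_of_ground_subst {σ : Subst S} {x : ℕ} {t : Term S}
    (hg : Term.Ground S (t.subst σ)) (h : Term.Occurs S x t) : x ∈ σ.dom := by
  by_contra hx
  exact hg x (Term.occurs_subst_of_eq_none h (Option.not_isSome_iff_eq_none.1 hx))

end Terms

section Atoms

variable {S : Sig}

theorem Atom.subst_eq_of_le {σ θ : Subst S} (hle : σ.le θ) {A : Atom S} (hA : A.IsFinite)
    (hdom : ∀ x, A.Occurs x → x ∈ σ.dom) : A.subst θ = A.subst σ :=
  congrArg (Atom.mk A.pred) (funext fun i =>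
    Term.subst_eq_of_le hle (hA i) fun x hx => hdom x ⟨i, hx⟩)

theorem Atom.subst_subst {ρ θ τ : Subst S} {A : Atom S} (hA : A.IsFinite)
    (h : ∀ x, A.Occurs x → ∃ u, ρ.toFun x = some u ∧ τ.toFun x = some (u.subst θ)) :
    (A.subst ρ).subst θ = A.subst τ :=
  congrArg (Atom.mk A.pred) (funext fun i =>
    Term.subst_subst (hA i) fun x hx => h x ⟨i, hx⟩)

theorem Atom.subst_isFinite {σ : Subst S} {A : Atom S} (hA : A.IsFinite)
    (hσ : ∀ x s, σ.toFun x = some s → Term.IsFinite S s) : (A.subst σ).IsFinite :=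
  fun i => Term.subst_isFinite (hA i) hσ

theorem Atom.mem_dom_of_ground_subst {σ : Subst S} {x : ℕ} {A : Atom S}
    (hg : (A.subst σ).Ground) (h : A.Occurs x) : x ∈ σ.dom :=
  let ⟨i, hi⟩ := h
  Term.mem_dom_of_ground_subst (hg i) hi

theorem clauseVars_subset_dom {C : Clause S} {τ : Subst S}
    (h : ∀ D ∈ C.head :: C.body, (D.subst τ).Ground) : clauseVars C ⊆ τ.dom := by
  rintro x (hx | ⟨D, hD, hx⟩)
  exacts [Atom.mem_dom_of_ground_subst (h _ List.mem_cons_self) hx,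
    Atom.mem_dom_of_ground_subst (h D (List.mem_cons_of_mem _ hD)) hx]

end Atoms

section Solutions

variable {S : Sig}

theorem eqnVars_union {E E' : Set (Eqn S)} : eqnVars (E ∪ E') = eqnVars E ∪ eqnVars E' := by
  ext x
  simp only [eqnVars, Set.mem_union, Set.mem_ofPred_eq, or_and_right, exists_or]

theorem occurs_of_mem_eqnVars_atomEqs {A B : Atom S} {x : ℕ}
    (hx : x ∈ eqnVars (atomEqs A B)) : A.Occurs x ∨ B.Occurs x := by
  obtain ⟨_, ⟨_, i, rfl⟩, h | h⟩ := hx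
  exacts [Or.inl ⟨i, h⟩, Or.inr ⟨_, h⟩]

theorem subst_eq_of_mem_atomEqs {σ : Subst S} {A B : Atom S} (h : A.subst σ = B.subst σ)
    {e : Eqn S} (he : e ∈ atomEqs A B) : e.1.subst σ = e.2.subst σ := by
  obtain ⟨hp, i, rfl⟩ := he
  obtain ⟨pA, aA⟩ := A
  obtain ⟨pB, aB⟩ := B
  obtain rfl : pA = pB := hp
  simp only [Atom.subst, Atom.mk.injEq, heq_eq_eq, true_and] at h
  exact congrFun h i

theorem EqnSetFin.union_atomEqs {E : Set (Eqn S)} (hE : EqnSetFin E) {A B : Atom S}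
    (hA : A.IsFinite) (hB : B.IsFinite) : EqnSetFin (E ∪ atomEqs A B) := by
  have hfin : (atomEqs A B).Finite := by
    by_cases hp : A.pred = B.pred
    · refine (Set.finite_range fun i : Fin (S.par A.pred) =>
        ((A.args i, B.args (Fin.cast (congrArg S.par hp) i)) : Eqn S)).subset ?_
      rintro _ ⟨_, i, rfl⟩
      exact ⟨i, rfl⟩
    · exact Set.finite_empty.subset fun _ ⟨hp', _⟩ => hp hp'
  refine ⟨hE.1.union hfin, ?_⟩
  rintro e (he | ⟨_, i, rfl⟩)
  exacts [hE.2 e he, ⟨hA i, hB _⟩]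

theorem Subst.le_refl (σ : Subst S) : σ.le σ := fun _ _ h => h

theorem Subst.le_trans {σ θ ι : Subst S} (h : σ.le θ) (h' : θ.le ι) : σ.le ι :=
  fun x t hx => h' x t (h x t hx)

theorem Subst.dom_subset_of_le {σ θ : Subst S} (h : σ.le θ) : σ.dom ⊆ θ.dom := fun x hx =>
  let ⟨t, ht⟩ := Option.isSome_iff_exists.1 hx
  Option.isSome_iff_exists.2 ⟨t, h x t ht⟩

theorem mem_sol_of_le {σ θ : Subst S} {E : Set (Eqn S)} (hE : EqnSetFin E) (hσ : σ ∈ sol E)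
    (hle : σ.le θ) (hθ : θ.Ground) : θ ∈ sol E := by
  refine ⟨hθ, hσ.2.1.trans (Subst.dom_subset_of_le hle), fun e he => ?_⟩
  have hdom : ∀ x, Term.Occurs S x e.1 ∨ Term.Occurs S x e.2 → x ∈ σ.dom :=
    fun x hx => hσ.2.1 ⟨e, he, hx⟩
  rw [Term.subst_eq_of_le hle (hE.2 e he).1 fun x hx => hdom x (Or.inl hx),
    Term.subst_eq_of_le hle (hE.2 e he).2 fun x hx => hdom x (Or.inr hx)]
  exact hσ.2.2 e he

theorem mem_sol_union_atomEqs {σ : Subst S} {E : Set (Eqn S)} (hσ : σ ∈ sol E) {A B : Atom S}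
    (hA : ∀ x, A.Occurs x → x ∈ σ.dom) (hB : ∀ x, B.Occurs x → x ∈ σ.dom)
    (h : A.subst σ = B.subst σ) : σ ∈ sol (E ∪ atomEqs A B) := by
  refine ⟨hσ.1, ?_, ?_⟩
  · rw [eqnVars_union]
    rintro x (hx | hx)
    exacts [hσ.2.1 hx, (occurs_of_mem_eqnVars_atomEqs hx).elim (hA x) (hB x)]
  · rintro e (he | he)
    exacts [hσ.2.2 e he, subst_eq_of_mem_atomEqs h he]

end Solutions

section Renaming

variable {S : Sig}

def Subst.shiftRenaming (τ : Subst S) (N : ℕ) : Subst S where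
  toFun x := (τ.toFun x).map fun _ => Term.var S (x + N)
  finDom := τ.finDom.subset fun x hx => by simpa using hx

def Subst.extendShift (σ τ : Subst S) (N : ℕ) : Subst S where
  toFun y := if N ≤ y then τ.toFun (y - N) else σ.toFun y
  finDom := by
    refine (σ.finDom.union (τ.finDom.image (· + N))).subset fun y hy => ?_
    change (if N ≤ y then τ.toFun (y - N) else σ.toFun y).isSome at hy
    by_cases h : N ≤ y
    · rw [if_pos h] at hy
      exact Or.inr ⟨y - N, hy, Nat.sub_add_cancel h⟩
    · rw [if_neg h] at hy
      exact Or.inl hy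

theorem Subst.shiftRenaming_toFun {τ : Subst S} {N x : ℕ} (hx : x ∈ τ.dom) :
    (τ.shiftRenaming N).toFun x = some (Term.var S (x + N)) := by
  obtain ⟨s, hs⟩ := Option.isSome_iff_exists.1 hx
  simp [Subst.shiftRenaming, hs]

theorem Subst.mem_dom_shiftRenaming {τ : Subst S} {N x : ℕ} :
    x ∈ (τ.shiftRenaming N).dom ↔ x ∈ τ.dom := by
  simp [Subst.dom, Subst.shiftRenaming]

theorem Subst.shiftRenaming_isFinite {τ : Subst S} {N x : ℕ} {s : Term S}
    (hs : (τ.shiftRenaming N).toFun x = some s) : Term.IsFinite S s := by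
  obtain ⟨_, -, rfl⟩ := Option.map_eq_some_iff.1 hs
  exact Term.var_isFinite _

theorem Subst.shiftRenaming_fresh {τ : Subst S} {N : ℕ} {C : Clause S} {avoid : Set ℕ}
    (hC : clauseVars C ⊆ τ.dom) (hN : ∀ a ∈ avoid, a < N) :
    FreshRenamingFor (τ.shiftRenaming N) C avoid := by
  refine ⟨fun x t hx => ?_, fun x hx => ?_, fun x y hxy hx => ?_⟩
  · obtain ⟨_, -, rfl⟩ := Option.map_eq_some_iff.1 hx
    exact ⟨x + N, rfl, fun h => absurd (hN _ h) (by omega)⟩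
  · exact Subst.mem_dom_shiftRenaming.2 (hC hx)
  · have hy : y ∈ (τ.shiftRenaming N).dom := by rwa [hxy] at hx
    rw [Subst.shiftRenaming_toFun (Subst.mem_dom_shiftRenaming.1 hx),
      Subst.shiftRenaming_toFun (Subst.mem_dom_shiftRenaming.1 hy)] at hxy
    have := Term.var_injective (Option.some_inj.1 hxy)
    omega

theorem Subst.le_extendShift {σ : Subst S} (τ : Subst S) {N : ℕ}
    (hN : ∀ x ∈ σ.dom, x < N) :
    σ.le (σ.extendShift τ N) := by
  intro x t hx
  have hxN : ¬ N ≤ x := Nat.not_le.2 (hN x (Option.isSome_iff_exists.2 ⟨t, hx⟩))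
  simpa [Subst.extendShift, hxN] using hx

theorem Subst.extendShift_ground {σ τ : Subst S} (hσ : σ.Ground) (hτ : τ.Ground) (N : ℕ) :
    (σ.extendShift τ N).Ground := by
  intro y t hy
  by_cases h : N ≤ y
  · exact hτ (y - N) t (by simpa [Subst.extendShift, h] using hy)
  · exact hσ y t (by simpa [Subst.extendShift, h] using hy)

theorem Atom.subst_shiftRenaming_extendShift {σ τ : Subst S} {N : ℕ} {A : Atom S}
    (hA : A.IsFinite) (hdom : ∀ x, A.Occurs x → x ∈ τ.dom) :
    (A.subst (τ.shiftRenaming N)).subst (σ.extendShift τ N) = A.subst τ := by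
  refine Atom.subst_subst hA fun x hx => ⟨_, Subst.shiftRenaming_toFun (hdom x hx), ?_⟩
  obtain ⟨s, hs⟩ := Option.isSome_iff_exists.1 (hdom x hx)
  have hθ : (σ.extendShift τ N).toFun (x + N) = some s := by
    simpa [Subst.extendShift] using hs
  rw [hs, Term.subst_var_some (Term.dest_var _) hθ]

end Renaming

section Completeness

variable {S : Sig}

/-- The invariant of a resolution state `H : ⟨G | E⟩` together with a candidate answer `σ`. -/
structure Admissible (H : Set (Atom S)) (G : List (Atom S)) (E : Set (Eqn S)) (σ : Subst S) :
    Prop where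
  hyps_isFinite : ∀ B ∈ H, B.IsFinite
  goal_isFinite : ∀ B ∈ G, B.IsFinite
  eqns : EqnSetFin E
  mem_sol : σ ∈ sol E
  hyps_dom : atomsVars H ⊆ σ.dom
  goal_dom : goalVars G ⊆ σ.dom

theorem admissible_singleton {H : Set (Atom S)} {A : Atom S} {E : Set (Eqn S)} {σ : Subst S}
    (hH : ∀ B ∈ H, B.IsFinite) (hA : A.IsFinite) (hE : EqnSetFin E) (hσ : σ ∈ sol E)
    (hHdom : atomsVars H ⊆ σ.dom) (hAdom : ∀ x, A.Occurs x → x ∈ σ.dom) :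
    Admissible H [A] E σ :=
  ⟨hH, by simpa using hA, hE, hσ, hHdom,
    fun _ ⟨_, hB, hx⟩ => hAdom _ (List.mem_singleton.1 hB ▸ hx)⟩

namespace Admissible

variable {H : Set (Atom S)} {B : Atom S} {G : List (Atom S)} {E : Set (Eqn S)} {σ : Subst S}

theorem head_isFinite (h : Admissible H (B :: G) E σ) : B.IsFinite :=
  h.goal_isFinite B List.mem_cons_self

theorem head_dom (h : Admissible H (B :: G) E σ) : ∀ x, B.Occurs x → x ∈ σ.dom :=
  fun _ hx => h.goal_dom ⟨B, List.mem_cons_self, hx⟩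

theorem image_subst_eq (h : Admissible H G E σ) {θ : Subst S} (hle : σ.le θ) :
    (fun D => D.subst θ) '' H = (fun D => D.subst σ) '' H :=
  Set.image_congr fun D hD =>
    Atom.subst_eq_of_le hle (h.hyps_isFinite D hD) fun _ hx => h.hyps_dom ⟨D, hD, hx⟩

theorem tail (h : Admissible H (B :: G) E σ) {E' : Set (Eqn S)} {θ : Subst S}
    (hE' : EqnSetFin E') (hθ : θ ∈ sol E') (hle : σ.le θ) : Admissible H G E' θ where
  hyps_isFinite := h.hyps_isFinite
  goal_isFinite D hD := h.goal_isFinite D (List.mem_cons_of_mem B hD)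
  eqns := hE'
  mem_sol := hθ
  hyps_dom := h.hyps_dom.trans (Subst.dom_subset_of_le hle)
  goal_dom := fun _ ⟨D, hD, hx⟩ =>
    Subst.dom_subset_of_le hle (h.goal_dom ⟨D, List.mem_cons_of_mem B hD, hx⟩)

theorem resolvent (h : Admissible H (B :: G) E σ) {C : Clause S} {ρ θ τ : Subst S}
    (hle : σ.le θ) (hθ : θ.Ground) (hρ : ∀ x s, ρ.toFun x = some s → Term.IsFinite S s)
    (hinst : ∀ D ∈ C.head :: C.body, (D.subst ρ).subst θ = D.subst τ)
    (hground : ∀ D ∈ C.head :: C.body, (D.subst τ).Ground)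
    (heq : B.subst σ = C.head.subst τ) :
    Admissible (H ∪ {B}) (C.body.map (·.subst ρ)) (E ∪ atomEqs B (C.head.subst ρ)) θ := by
  have hdom := Subst.dom_subset_of_le hle
  have hinst_dom : ∀ D ∈ C.head :: C.body, ∀ x, (D.subst ρ).Occurs x → x ∈ θ.dom :=
    fun D hD _ hx => Atom.mem_dom_of_ground_subst (by rw [hinst D hD]; exact hground D hD) hx
  have hhead := List.mem_cons_self (a := C.head) (l := C.body)
  refine ⟨?_, ?_, ?_, ?_, ?_, ?_⟩
  · rintro D (hD | rfl)
    exacts [h.hyps_isFinite D hD, h.head_isFinite]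
  · simp only [List.mem_map]
    rintro _ ⟨D, hD, rfl⟩
    exact Atom.subst_isFinite (C.finBody D hD) hρ
  · exact h.eqns.union_atomEqs h.head_isFinite (Atom.subst_isFinite C.finHead hρ)
  · refine mem_sol_union_atomEqs (mem_sol_of_le h.eqns h.mem_sol hle hθ)
      (fun x hx => hdom (h.head_dom x hx)) (hinst_dom _ hhead) ?_
    rw [Atom.subst_eq_of_le hle h.head_isFinite h.head_dom, heq, hinst _ hhead]
  · rintro x ⟨D, hD | rfl, hx⟩
    exacts [hdom (h.hyps_dom ⟨D, hD, hx⟩), hdom (h.head_dom x hx)]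
  · rintro x ⟨_, hD', hx⟩
    obtain ⟨D, hD, rfl⟩ := List.mem_map.1 hD'
    exact hinst_dom D (List.mem_cons_of_mem _ hD) x hx

theorem exists_fresh_resolvent (h : Admissible H (B :: G) E σ) {C : Clause S} {τ : Subst S}
    (hτ : τ.Ground) (hground : ∀ D ∈ C.head :: C.body, (D.subst τ).Ground)
    (heq : B.subst σ = C.head.subst τ) :
    ∃ ρ θ : Subst S, FreshRenamingFor ρ C (eqnVars E ∪ atomsVars H ∪ goalVars (B :: G)) ∧
      σ.le θ ∧
      Admissible (H ∪ {B}) (C.body.map (·.subst ρ)) (E ∪ atomEqs B (C.head.subst ρ)) θ ∧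
      ∀ D ∈ C.body, (D.subst ρ).subst θ = D.subst τ := by
  obtain ⟨b, hb⟩ := σ.finDom.bddAbove
  have hN : ∀ x ∈ σ.dom, x < b + 1 := fun x hx => Nat.lt_succ_of_le (hb hx)
  have hV := clauseVars_subset_dom hground
  have hinst : ∀ D ∈ C.head :: C.body,
      (D.subst (τ.shiftRenaming (b + 1))).subst (σ.extendShift τ (b + 1)) = D.subst τ := by
    rintro D (_ | ⟨_, hD⟩)
    · exact Atom.subst_shiftRenaming_extendShift C.finHead fun x hx => hV (Or.inl hx)
    · exact Atom.subst_shiftRenaming_extendShift (C.finBody D hD)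
        fun x hx => hV (Or.inr ⟨D, hD, hx⟩)
  refine ⟨_, _, Subst.shiftRenaming_fresh hV fun a ha => hN a ?_, Subst.le_extendShift τ hN,
    h.resolvent (Subst.le_extendShift τ hN) (Subst.extendShift_ground h.mem_sol.1 hτ _)
      (fun _ _ => Subst.shiftRenaming_isFinite) hinst hground heq,
    fun D hD => hinst D (List.mem_cons_of_mem _ hD)⟩
  rcases ha with (ha | ha) | ha
  exacts [h.mem_sol.2.1 ha, h.hyps_dom ha, h.goal_dom ha]

end Admissible

def Resolvable (P coP : Set (Clause S)) (H : Set (Atom S)) (G : List (Atom S))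
    (E : Set (Eqn S)) (σ : Subst S) : Prop :=
  ∃ (E' : Set (Eqn S)) (θ : Subst S), EqnSetFin E' ∧ θ ∈ sol E' ∧
    OpSem S P coP H G E E' ∧ σ.le θ

/-- The rest of the goal is passed as a continuation, so that this can be proved by induction
on the derivation of the single ground judgment `Hg ⊢ a`. -/
def Completes (P coP : Set (Clause S)) (Hg : Set (Atom S)) (a : Atom S) : Prop :=
  ∀ ⦃H : Set (Atom S)⦄ ⦃B : Atom S⦄ ⦃G : List (Atom S)⦄ ⦃E : Set (Eqn S)⦄
    ⦃σ : Subst S⦄,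
    Admissible H (B :: G) E σ → (fun D => D.subst σ) '' H = Hg → B.subst σ = a →
    (∀ ⦃E' : Set (Eqn S)⦄ ⦃θ : Subst S⦄, Admissible H G E' θ → σ.le θ →
      Resolvable P coP H G E' θ) →
    Resolvable P coP H (B :: G) E σ

variable {P coP : Set (Clause S)}

theorem Admissible.resolvable_cons {H : Set (Atom S)} {B : Atom S} {G : List (Atom S)}
    {E : Set (Eqn S)} {σ : Subst S} (h : Admissible H (B :: G) E σ)
    {P' coP' : Set (Clause S)} {H' : Set (Atom S)} {G' : List (Atom S)} {E₁ : Set (Eqn S)}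
    {σ₁ : Subst S} (hle : σ.le σ₁) (hfirst : Resolvable P' coP' H' G' E₁ σ₁)
    (hrest : ∀ ⦃E' : Set (Eqn S)⦄ ⦃θ : Subst S⦄, Admissible H G E' θ → σ.le θ →
      Resolvable P coP H G E' θ)
    (hrule : ∀ ⦃E₂ E₃ : Set (Eqn S)⦄, OpSem S P' coP' H' G' E₁ E₂ →
      OpSem S P coP H G E₂ E₃ → OpSem S P coP H (B :: G) E E₃) :
    Resolvable P coP H (B :: G) E σ := by
  obtain ⟨E₂, θ₁, hE₂, hθ₁, hop₁, hle₁⟩ := hfirst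
  have hσθ₁ := Subst.le_trans hle hle₁
  obtain ⟨E₃, θ₂, hE₃, hθ₂, hop₂, hle₂⟩ :=
    hrest (h.tail hE₂ hθ₁ hσθ₁) hσθ₁
  exact ⟨E₃, θ₂, hE₃, hθ₂, hrule hop₁ hop₂, Subst.le_trans hσθ₁ hle₂⟩

theorem Admissible.resolvable {H : Set (Atom S)} {G : List (Atom S)} {E : Set (Eqn S)}
    {σ : Subst S} (h : Admissible H G E σ)
    (hG : ∀ D ∈ G, Completes P coP ((fun D => D.subst σ) '' H) (D.subst σ)) :
    Resolvable P coP H G E σ := by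
  induction G generalizing E σ with
  | nil => exact ⟨E, σ, h.eqns, h.mem_sol, OpSem.empty .., Subst.le_refl σ⟩
  | cons B G ih =>
    refine hG B List.mem_cons_self h rfl rfl fun E' θ h' hle => ih h' fun D hD => ?_
    rw [h.image_subst_eq hle, Atom.subst_eq_of_le hle (h'.goal_isFinite D hD)
      fun _ hx => h.goal_dom ⟨D, List.mem_cons_of_mem B hD, hx⟩]
    exact hG D (List.mem_cons_of_mem B hD)

theorem completes_of_groundInst {Hg : Set (Atom S)} {r : Atom S × List (Atom S)}
    (hr : r ∈ GroundInst P) (hprem : ∀ b ∈ r.2, Completes P coP (Hg ∪ {r.1}) b) :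
    Completes P coP Hg r.1 := by
  obtain ⟨C, hC, τ, hτ, hhead, hbody, hhead_ground, hbody_ground⟩ := hr
  intro H B G E σ h hHg hB hrest
  have hground : ∀ D ∈ C.head :: C.body, (D.subst τ).Ground := by
    rintro D (_ | ⟨_, hD⟩)
    exacts [hhead ▸ hhead_ground, hbody_ground _ (hbody ▸ List.mem_map_of_mem hD)]
  have heq : B.subst σ = C.head.subst τ := hB.trans hhead
  obtain ⟨ρ, θ, hfresh, hle, h', hinst⟩ := h.exists_fresh_resolvent hτ hground heq
  have hHg' : (fun D => D.subst θ) '' (H ∪ {B}) = Hg ∪ {r.1} := by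
    rw [Set.image_union, Set.image_singleton, h.image_subst_eq hle, hHg,
      Atom.subst_eq_of_le hle h.head_isFinite h.head_dom, hB]
  refine h.resolvable_cons hle (h'.resolvable fun D' hD' => ?_) hrest fun _ _ =>
    OpSem.step (G1 := []) C ρ hC hfresh (congrArg Atom.pred heq :) ⟨θ, h'.mem_sol⟩
  obtain ⟨D, hD, rfl⟩ := List.mem_map.1 hD'
  rw [hHg', hinst D hD]
  exact hprem _ (hbody ▸ List.mem_map_of_mem hD)

theorem completes_of_mem_Ind (coP : Set (Clause S)) {a : Atom S} (ha : a ∈ Ind P)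
    (Hg : Set (Atom S)) : Completes P coP Hg a := by
  have hmodel : IsModel P {a | ∀ Hg, Completes P coP Hg a} := by
    rintro _ ⟨r, hr, rfl, hprem⟩ Hg
    exact completes_of_groundInst hr fun b hb => hprem b hb _
  exact Set.sInter_subset_of_mem hmodel ha Hg

theorem completes_of_mem_hyp {Hg : Set (Atom S)} {a : Atom S} (ha : a ∈ Hg)
    (hind : a ∈ Ind (P ∪ coP)) : Completes P coP Hg a := by
  rcases eq_or_ne coP ∅ with rfl | hco
  · rw [Set.union_empty] at hind
    exact completes_of_mem_Ind ∅ hind Hg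
  intro H B G E σ h hHg hB hrest
  obtain ⟨B', hB', hB'σ⟩ : ∃ B' ∈ H, B'.subst σ = a := by
    rw [← hHg] at ha
    exact ha
  have heq : B.subst σ = B'.subst σ := hB.trans hB'σ.symm
  have h' : Admissible ∅ [B] (E ∪ atomEqs B B') σ :=
    admissible_singleton (by simp) h.head_isFinite
      (h.eqns.union_atomEqs h.head_isFinite (h.hyps_isFinite B' hB'))
      (mem_sol_union_atomEqs h.mem_sol h.head_dom (fun x hx => h.hyps_dom ⟨B', hB', hx⟩) heq)
      (by simp [atomsVars]) h.head_dom
  refine h.resolvable_cons (Subst.le_refl σ) (h'.resolvable ?_) hrest fun _ _ =>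
    OpSem.cohyp (G1 := []) hco hB' (congrArg Atom.pred heq :) ⟨σ, h'.mem_sol⟩
  simpa [hB] using completes_of_mem_Ind ∅ hind ∅

theorem LoopInd.completes {Hg : Set (Atom S)} {a : Atom S} (h : LoopInd P coP Hg a) :
    Completes P coP Hg a := by
  induction h with
  | hp ha hind => exact completes_of_mem_hyp ha hind
  | rule r hr hra _ ih => exact hra ▸ completes_of_groundInst hr (hra ▸ ih)

end Completeness

theorem single_atom_completeness_wrt_loop_general (S : Sig) (P coP : Set (Clause S))
    (H : Set (Atom S)) (hHsyn : ∀ B ∈ H, B.IsFinite)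
    (A : Atom S) (hAfin : A.IsFinite)
    (E : Set (Eqn S)) (hE : EqnSetFin E)
    (σ : Subst S) (hσ : σ ∈ sol E)
    (hdomH : atomsVars H ⊆ σ.dom) (hdomA : ∀ x, Atom.Occurs x A → x ∈ σ.dom)
    (h : LoopInd P coP ((fun B => B.subst σ) '' H) (A.subst σ)) :
    ∃ (E' : Set (Eqn S)) (θ : Subst S), EqnSetFin E' ∧ θ ∈ sol E' ∧
      OpSem S P coP H [A] E E' ∧ σ.le θ :=
  (admissible_singleton hHsyn hAfin hE hσ hdomH hdomA).resolvable (by simpa using h.completes)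

/-- Single-atom completeness w.r.t. the inductive characterization of regular semantics:
if `Hσ ⊢ Aσ` is derivable in `Loop(P,coP)` then resolution of `⟨A | E⟩` under `H`
succeeds with an answer extending `σ`. -/
theorem single_atom_completeness_wrt_loop (S : Sig) (P coP : Set (Clause S))
    (hP : P.Finite) (hcoP : coP.Finite)
    (H : Set (Atom S)) (hHfin : H.Finite) (hHsyn : ∀ B ∈ H, B.IsFinite)
    (A : Atom S) (hAfin : A.IsFinite)
    (E : Set (Eqn S)) (hE : EqnSetFin E)
    (σ : Subst S) (hσ : σ ∈ sol E)
    (hdomH : atomsVars H ⊆ σ.dom) (hdomA : ∀ x, Atom.Occurs x A → x ∈ σ.dom)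
    (h : LoopInd P coP ((fun B => B.subst σ) '' H) (A.subst σ)) :
    ∃ (E' : Set (Eqn S)) (θ : Subst S), EqnSetFin E' ∧ θ ∈ sol E' ∧
      OpSem S P coP H [A] E E' ∧ σ.le θ :=
  single_atom_completeness_wrt_loop_general S P coP H hHsyn A hAfin E hE σ hσ hdomH hdomA h

end FlexLP
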